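/- Fix n, k, and suppose (v,w) ∈ S_n × S_n are connected by a path in QB(S_n) from w to v whose edge labels form a subsequence of the reverse lex (−ϖ_k)-chain, with v ≠ w. Then the degree d = (d_1,...,d_{n-1}) recording the total coroot contribution of the quantum edges of this path (i.e., down(w,A) = Σ d_i α_i^∨) is given by: d_i = #{ j ≤ i : v(j) < w(j) } for 1 ≤ i ≤ k, and d_i = #{ j > i : v(j) > w(j) } for k ≤ i ≤ n-1. -/

import Mathlib

open scoped Classical

noncomputable section

/-- The length (number of inversions) of a permutation in `S_n`. -/
def lenA {n : ℕ} (w : Equiv.Perm (Fin n)) : ℕ :=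
  (Finset.univ.filter (fun p : Fin n × Fin n => p.1 < p.2 ∧ w p.2 < w p.1)).card

/-- Bruhat edge `w → w·(i,j)` of the type `A_{n-1}` quantum Bruhat graph:
`ℓ(w·(i,j)) = ℓ(w) + 1`. -/
def bEdgeA {n : ℕ} (w : Equiv.Perm (Fin n)) (i j : Fin n) : Prop :=
  i < j ∧ lenA (w * Equiv.swap i j) = lenA w + 1

/-- Quantum edge `w → w·(i,j)`: `ℓ(w·(i,j)) = ℓ(w) + 1 - 2(j - i)`. -/
def qEdgeA {n : ℕ} (w : Equiv.Perm (Fin n)) (i j : Fin n) : Prop :=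
  i < j ∧ lenA (w * Equiv.swap i j) + 2 * ((j : ℕ) - (i : ℕ)) = lenA w + 1

/-- Edge of the quantum Bruhat graph `QB(S_n)` labeled by the transposition `(i,j)`. -/
def edgeA {n : ℕ} (w : Equiv.Perm (Fin n)) (i j : Fin n) : Prop :=
  bEdgeA w i j ∨ qEdgeA w i j

/-- `a ≺ b ≺ c` in the circular order on `{1,…,n}` starting at `a`. -/
def circB {n : ℕ} (a b c : Fin n) : Prop := b ≠ a ∧ b - a < c - a

/-- `a ≺ʳ b ≺ʳ c` in the reverse circular order on `{1,…,n}` starting at `a`. -/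
def circBR {n : ℕ} (a b c : Fin n) : Prop := b ≠ a ∧ a - b < a - c

/-- `EPathA w L v`: `L` is the list of labels of a directed path from `w` to `v` in
the quantum Bruhat graph `QB(S_n)`. -/
def EPathA {n : ℕ} : Equiv.Perm (Fin n) → List (Fin n × Fin n) → Equiv.Perm (Fin n) → Prop
  | w, [], v => w = v
  | w, p :: L, v => edgeA w p.1 p.2 ∧ EPathA (w * Equiv.swap p.1 p.2) L v

/-- The labels of the quantum edges occurring along a path. -/
def qLabels {n : ℕ} : Equiv.Perm (Fin n) → List (Fin n × Fin n) → List (Fin n × Fin n)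
  | _, [] => []
  | w, p :: L =>
      (if qEdgeA w p.1 p.2 then [p] else []) ++ qLabels (w * Equiv.swap p.1 p.2) L

/-- The order in which labels occur in the (reverse lex) `(-ϖ_k)`-chain
`(1,n), …, (1,k+1), (2,n), …, (2,k+1), …, (k,n), …, (k,k+1)`:
first index ascending, second descending. -/
def revChainOrd {n : ℕ} (p q : Fin n × Fin n) : Prop :=
  p.1 < q.1 ∨ (p.1 = q.1 ∧ q.2 < p.2)

/-- The coefficient `d_i` of the simple coroot `α_i^∨` (1-indexed `i`) in the degree
`down(w,A)` of a path: the number of quantum edges whose label `(a,b)` (1-indexed)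
satisfies `a ≤ i < b`. -/
def degCoeff {n : ℕ} (w : Equiv.Perm (Fin n)) (L : List (Fin n × Fin n)) (i : ℕ) : ℕ :=
  ((qLabels w L).filter
    (fun p : Fin n × Fin n => decide ((p.1 : ℕ) < i ∧ i ≤ (p.2 : ℕ)))).length

/-!
Positions `a < k` are only moved by the labels `(a, ·)`, which form one consecutive block, so
position `a` still holds `w a` when its block starts. Within the block a Bruhat step raises the
value at `a` and a quantum step lowers it below `w a`; the compatibility conditions of `ChainInv`
show that after a quantum step every value still to be swapped into `a` lies strictly between the
current value and `w a`, so no second quantum step can occur and the value ends below `w a`.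
Dually, the compatibility conditions keep a column `b ≥ k` at or below `w b` until its only
possible quantum step raises it above `w b`, where it stays. Hence the quantum labels `(a, ·)` number `[v a < w a]`, those `(·, b)` number
`[w b < v b]`, and `d_i` is the sum of the former over `a < i` (for `i ≤ k`) or of the latter over
`b ≥ i` (for `i ≥ k`), indices being `0`-based.
-/

open Equiv Finset

theorem List.countP_mem_eq_sum {α β : Type*} [DecidableEq β] (l : List α) (f : α → β)
    (s : Finset β) : l.countP (fun x => f x ∈ s) = ∑ b ∈ s, l.countP (fun x => f x = b) := by
  induction l with
  | nil => simp
  | cons x l ih => simp [List.countP_cons, ih, sum_add_distrib]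

section Inversions

variable {n : ℕ}

def inversions (u : Perm (Fin n)) : Finset (Fin n × Fin n) :=
  {p | p.1 < p.2 ∧ u p.2 < u p.1}

theorem mem_inversions {u : Perm (Fin n)} {p : Fin n × Fin n} :
    p ∈ inversions u ↔ p.1 < p.2 ∧ u p.2 < u p.1 := by
  simp [inversions]

theorem card_inversions_mul (u σ : Perm (Fin n)) :
    #(inversions (u * σ)) =
      #(inversions u \ inversions σ⁻¹) + #(inversions σ⁻¹ \ inversions u) := by
  -- `(p, q) ↦ (σ p, σ q)` matches the inversions of `u * σ` with the pairs `(x, y)` (in either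
  -- order) inverted by exactly one of `u` and `σ⁻¹`
  set T : Finset (Fin n × Fin n) := {p | σ⁻¹ p.1 < σ⁻¹ p.2 ∧ u p.2 < u p.1}
  have hT : #(inversions (u * σ)) = #T :=
    card_equiv (σ.prodCongr σ) fun p => by simp [mem_inversions, T]
  have hlt : {p ∈ T | p.1 < p.2} = inversions u \ inversions σ⁻¹ := by
    ext ⟨x, y⟩
    have := σ⁻¹.injective.ne_iff (x := x) (y := y)
    simp only [T, mem_inversions, mem_filter, mem_sdiff, mem_univ, true_and]
    constructor
    · rintro ⟨⟨hσ, hu⟩, hxy⟩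
      exact ⟨⟨hxy, hu⟩, fun h => lt_asymm hσ h.2⟩
    · rintro ⟨⟨hxy, hu⟩, h⟩
      exact ⟨⟨lt_of_le_of_ne (not_lt.1 fun h' => h ⟨hxy, h'⟩) (this.2 hxy.ne), hu⟩, hxy⟩
  have hgt : {p ∈ T | ¬p.1 < p.2} = (inversions σ⁻¹ \ inversions u).image Prod.swap := by
    ext ⟨x, y⟩
    have := u.injective.ne_iff (x := y) (y := x)
    simp only [T, mem_inversions, mem_filter, mem_sdiff, mem_univ, true_and, mem_image,
      Prod.exists, Prod.swap_prod_mk, Prod.mk.injEq]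
    constructor
    · rintro ⟨⟨hσ, hu⟩, hxy⟩
      refine ⟨y, x, ⟨⟨lt_of_le_of_ne (not_lt.1 hxy) ?_, hσ⟩, fun h => lt_asymm hu h.2⟩,
        rfl, rfl⟩
      rintro rfl; exact lt_irrefl _ hσ
    · rintro ⟨y, x, ⟨⟨hyx, hσ⟩, h⟩, rfl, rfl⟩
      exact ⟨⟨hσ, lt_of_le_of_ne (not_lt.1 fun h' => h ⟨hyx, h'⟩) (this.2 hyx.ne)⟩,
        not_lt.2 hyx.le⟩
  rw [hT, ← card_filter_add_card_filter_not (s := T) (fun p => p.1 < p.2), hlt, hgt,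
    card_image_of_injective _ Prod.swap_injective]

theorem mem_inversions_swap {i j : Fin n} (hij : i < j) {p : Fin n × Fin n} :
    p ∈ inversions (swap i j) ↔
      p = (i, j) ∨ (p.1 = i ∧ i < p.2 ∧ p.2 < j) ∨ (i < p.1 ∧ p.1 < j ∧ p.2 = j) := by
  obtain ⟨x, y⟩ := p
  simp only [mem_inversions, swap_apply_def, Prod.mk.injEq]
  split_ifs <;> omega

theorem lenA_eq_card_inversions (u : Perm (Fin n)) : lenA u = #(inversions u) := rfl

theorem inversions_swap {i j : Fin n} (hij : i < j) :
    inversions (swap i j) =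
      insert (i, j) ((Ioo i j).image (i, ·) ∪ (Ioo i j).image (·, j)) := by
  ext ⟨x, y⟩
  simp only [mem_inversions_swap hij, mem_insert, mem_union, mem_image, mem_Ioo, Prod.mk.injEq]
  constructor
  · rintro (h | ⟨rfl, h⟩ | ⟨h₁, h₂, rfl⟩)
    · exact Or.inl h
    · exact Or.inr (Or.inl ⟨y, h, rfl, rfl⟩)
    · exact Or.inr (Or.inr ⟨x, ⟨h₁, h₂⟩, rfl, rfl⟩)
  · rintro (h | ⟨c, h, rfl, rfl⟩ | ⟨c, h, rfl, rfl⟩)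
    · exact Or.inl h
    · exact Or.inr (Or.inl ⟨rfl, h⟩)
    · exact Or.inr (Or.inr ⟨h.1, h.2, rfl⟩)

theorem sum_inversions_swap {i j : Fin n} (hij : i < j) (g : Fin n × Fin n → ℕ) :
    ∑ p ∈ inversions (swap i j), g p = g (i, j) + ∑ c ∈ Ioo i j, (g (i, c) + g (c, j)) := by
  have hdisj : Disjoint ((Ioo i j).image (i, ·)) ((Ioo i j).image (·, j)) := by
    simp only [disjoint_left, mem_image, mem_Ioo, not_exists, not_and]
    rintro _ ⟨c, hc, rfl⟩ d hd h
    cases congrArg Prod.fst h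
    exact lt_irrefl _ hd.1
  have hnot : (i, j) ∉ (Ioo i j).image (i, ·) ∪ (Ioo i j).image (·, j) := by
    simp only [mem_union, mem_image, mem_Ioo, Prod.mk.injEq, not_or, not_exists, not_and]
    constructor <;> intros <;> omega
  rw [inversions_swap hij, sum_insert hnot, sum_union hdisj,
    sum_image fun _ _ _ _ h => congrArg Prod.snd h,
    sum_image fun _ _ _ _ h => congrArg Prod.fst h, sum_add_distrib]

/-- The length formula for right multiplication by a transposition, for `u i < u j` and
`u j < u i` at once: one of the two counts always vanishes. -/
theorem lenA_mul_swap (u : Perm (Fin n)) {i j : Fin n} (hij : i < j) :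
    lenA (u * swap i j) + (if u j < u i then 1 else 0) +
        2 * #{c ∈ Ioo i j | u j < u c ∧ u c < u i} =
      lenA u + (if u i < u j then 1 else 0) + 2 * #{c ∈ Ioo i j | u i < u c ∧ u c < u j} := by
  have hmul := card_inversions_mul u (swap i j)
  rw [swap_inv] at hmul
  have hsplit := card_sdiff_add_card_inter (inversions u) (inversions (swap i j))
  have hinter : #(inversions u ∩ inversions (swap i j)) =
      ∑ p ∈ inversions (swap i j), if u p.2 < u p.1 then 1 else 0 := by
    rw [inter_comm, ← filter_mem_eq_inter, card_filter]
    refine sum_congr rfl fun p hp => ?_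
    simp only [mem_inversions, (mem_inversions.1 hp).1, true_and]
  have hsdiff : #(inversions (swap i j) \ inversions u) =
      ∑ p ∈ inversions (swap i j), if ¬u p.2 < u p.1 then 1 else 0 := by
    rw [← filter_notMem_eq_sdiff, card_filter]
    refine sum_congr rfl fun p hp => ?_
    simp only [mem_inversions, (mem_inversions.1 hp).1, true_and]
  have hpoint : ∑ c ∈ Ioo i j, ((if ¬u c < u i then 1 else 0) +
        (if ¬u j < u c then 1 else 0) + 2 * if u j < u c ∧ u c < u i then 1 else 0) =
      ∑ c ∈ Ioo i j, ((if u c < u i then 1 else 0) + (if u j < u c then 1 else 0) +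
        2 * if u i < u c ∧ u c < u j then 1 else 0) := by
    refine sum_congr rfl fun c hc => ?_
    have hci : u c ≠ u i := u.injective.ne (mem_Ioo.1 hc).1.ne'
    have hcj : u c ≠ u j := u.injective.ne (mem_Ioo.1 hc).2.ne
    split_ifs <;> omega
  rw [sum_inversions_swap hij] at hinter hsdiff
  simp only [sum_add_distrib, ← mul_sum, ← card_filter] at hpoint hinter hsdiff
  have hji : (if ¬u j < u i then 1 else 0) = if u i < u j then 1 else 0 := by
    have := u.injective.ne hij.ne
    split_ifs <;> omega
  rw [lenA_eq_card_inversions, lenA_eq_card_inversions, ← hji]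
  omega

end Inversions

section Edges

variable {n : ℕ} {u : Perm (Fin n)} {i j : Fin n}

theorem mul_swap_apply_left (u : Perm (Fin n)) (i j : Fin n) : (u * swap i j) i = u j := by
  simp [Perm.mul_apply]

theorem mul_swap_apply_right (u : Perm (Fin n)) (i j : Fin n) : (u * swap i j) j = u i := by
  simp [Perm.mul_apply]

theorem mul_swap_apply_of_ne (u : Perm (Fin n)) {i j c : Fin n} (hi : c ≠ i) (hj : c ≠ j) :
    (u * swap i j) c = u c := by
  simp [Perm.mul_apply, swap_apply_of_ne_of_ne hi hj]

theorem card_filter_between_eq_zero (s : Finset (Fin n)) (h : u j < u i) :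
    #{c ∈ s | u i < u c ∧ u c < u j} = 0 :=
  card_eq_zero.2 <| filter_eq_empty_iff.2 fun _ _ hc => lt_asymm h (hc.1.trans hc.2)

theorem bEdgeA.apply_lt_and_not_between (h : bEdgeA u i j) :
    u i < u j ∧ ∀ c, i < c → c < j → u c < u i ∨ u j < u c := by
  obtain ⟨hij, hlen⟩ := h
  have hformula := lenA_mul_swap u hij
  have hne := u.injective.ne hij.ne
  rcases hne.lt_or_gt with hlt | hgt
  · have hB := card_filter_between_eq_zero (Ioo i j) hlt
    simp only [if_pos hlt, if_neg (lt_asymm hlt), hB, hlen] at hformula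
    refine ⟨hlt, fun c hic hcj => ?_⟩
    have hB' : #{c ∈ Ioo i j | u i < u c ∧ u c < u j} = 0 := by omega
    have hc := filter_eq_empty_iff.1 (card_eq_zero.1 hB') (mem_Ioo.2 ⟨hic, hcj⟩)
    have := u.injective.ne hic.ne'
    have := u.injective.ne hcj.ne
    omega
  · simp only [if_pos hgt, if_neg (lt_asymm hgt), card_filter_between_eq_zero _ hgt, hlen]
      at hformula
    omega

theorem qEdgeA.apply_lt_and_between (h : qEdgeA u i j) :
    u j < u i ∧ ∀ c, i < c → c < j → u j < u c ∧ u c < u i := by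
  obtain ⟨hij, hlen⟩ := h
  have hformula := lenA_mul_swap u hij
  have hne := u.injective.ne hij.ne
  rcases hne.lt_or_gt with hlt | hgt
  · simp only [if_pos hlt, if_neg (lt_asymm hlt), card_filter_between_eq_zero _ hlt]
      at hformula
    omega
  · simp only [if_pos hgt, if_neg (lt_asymm hgt), card_filter_between_eq_zero _ hgt]
      at hformula
    have hall : #{c ∈ Ioo i j | u j < u c ∧ u c < u i} = #(Ioo i j) := by
      rw [Fin.card_Ioo]; omega
    exact ⟨hgt, fun c hic hcj => card_filter_eq_iff.1 hall c (mem_Ioo.2 ⟨hic, hcj⟩)⟩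

theorem edgeA.lt (h : edgeA u i j) : i < j := h.elim (·.1) (·.1)

theorem edgeA.qEdgeA_iff (h : edgeA u i j) : qEdgeA u i j ↔ u j < u i :=
  ⟨fun hq => hq.apply_lt_and_between.1, fun hlt => h.resolve_left fun hb =>
    lt_asymm hlt hb.apply_lt_and_not_between.1⟩

theorem edgeA.apply_between (h : edgeA u i j) {c : Fin n} (hic : i < c) (hcj : c < j) :
    (u i < u j ∧ (u c < u i ∨ u j < u c)) ∨ (u j < u i ∧ u j < u c ∧ u c < u i) := by
  rcases h with hb | hq
  · exact Or.inl ⟨hb.apply_lt_and_not_between.1, hb.apply_lt_and_not_between.2 c hic hcj⟩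
  · exact Or.inr ⟨hq.apply_lt_and_between.1, hq.apply_lt_and_between.2 c hic hcj⟩

end Edges

section Chain

variable {n : ℕ}

/-- `lb` is a natural number so that `(0, n)` can stand for the start of a path, before any
label. -/
def Follows (la : Fin n) (lb : ℕ) (q : Fin n × Fin n) : Prop :=
  la < q.1 ∨ (la = q.1 ∧ (q.2 : ℕ) < lb)

theorem Follows.trans {la : Fin n} {lb : ℕ} {p q : Fin n × Fin n} (hp : Follows la lb p)
    (hq : Follows p.1 p.2 q) : Follows la lb q := by
  dsimp only [Follows] at *
  omega

theorem revChainOrd_trans {n : ℕ} {p q r : Fin n × Fin n} (hpq : revChainOrd p q)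
    (hqr : revChainOrd q r) : revChainOrd p r := by
  unfold revChainOrd at *
  omega

def RowCompat (w u : Perm (Fin n)) (a c : Fin n) : Prop :=
  (u a < w a → u a < u c ∧ u c < w a) ∧ (w a ≤ u a → u c < w a ∨ u a < u c)

def ColCompat (w u : Perm (Fin n)) (b c : Fin n) : Prop :=
  (w b < u b → w b < u c ∧ u c < u b) ∧ (u b < w b → u c < u b ∨ w b < u c)

/-- The state of a path from `w` along the chain, just after the label `(la, lb)`: rows below `k`
not yet reached are untouched, and every value that may still be swapped into row `la`, or into a
column `b ≥ k` by a later label `(c, b)`, is compatible with that row or column. -/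
structure ChainInv (w : Perm (Fin n)) (k : ℕ) (la : Fin n) (lb : ℕ) (u : Perm (Fin n)) :
    Prop where
  untouched : ∀ c : Fin n, la < c → (c : ℕ) < k → u c = w c
  row : ∀ c : Fin n, la < c → (c : ℕ) < lb → RowCompat w u la c
  col : ∀ b c : Fin n, k ≤ (b : ℕ) → (c : ℕ) < k → Follows la lb (c, b) → ColCompat w u b c

theorem ChainInv.init (w : Perm (Fin n)) (k : ℕ) (hn : 0 < n) : ChainInv w k ⟨0, hn⟩ n w where
  untouched _ _ _ := rfl
  row c hc _ := by
    have := w.injective.ne hc.ne'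
    exact ⟨fun h => absurd h (lt_irrefl _), fun _ => by omega⟩
  col _ _ _ _ _ := ⟨fun h => absurd h (lt_irrefl _), fun h => absurd h (lt_irrefl _)⟩

variable {w u : Perm (Fin n)} {k : ℕ} {la : Fin n} {lb : ℕ} {e₁ e₂ : Fin n}

theorem ChainInv.rowCompat_of_follows (H : ChainInv w k la lb u) (he₁ : (e₁ : ℕ) < k)
    (hf : Follows la lb (e₁, e₂)) {c : Fin n} (hc₁ : e₁ < c) (hc₂ : c ≤ e₂) :
    RowCompat w u e₁ c := by
  rcases hf with hla | ⟨rfl, hlb⟩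
  · have := H.untouched e₁ hla he₁
    have := u.injective.ne hc₁.ne'
    constructor <;> omega
  · exact H.row c hc₁ (Nat.lt_of_le_of_lt hc₂ hlb)

theorem ChainInv.mul_swap (H : ChainInv w k la lb u) (he₁ : (e₁ : ℕ) < k) (he₂ : k ≤ (e₂ : ℕ))
    (hf : Follows la lb (e₁, e₂)) (he : edgeA u e₁ e₂) :
    ChainInv w k e₁ e₂ (u * swap e₁ e₂) where
  untouched c hc₁ hc₂ := by
    rw [mul_swap_apply_of_ne u hc₁.ne' (by omega)]
    exact H.untouched c (by dsimp only [Follows] at hf; omega) hc₂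
  row c hc₁ hc₂ := by
    have hrow := H.rowCompat_of_follows he₁ hf hc₁ hc₂.le
    have hrow₂ := H.rowCompat_of_follows he₁ hf he.lt le_rfl
    have hbetween := he.apply_between hc₁ hc₂
    have := u.injective.ne hc₁.ne'
    unfold RowCompat at *
    rw [mul_swap_apply_left, mul_swap_apply_of_ne u hc₁.ne' (by omega)]
    omega
  col b c hb hc hbc := by
    have hold : ∀ {b c : Fin n}, k ≤ (b : ℕ) → (c : ℕ) < k → Follows la lb (c, b) →
        ColCompat w u b c := H.col _ _
    have hc₂ : c ≠ e₂ := by omega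
    unfold ColCompat at *
    by_cases hbe : b = e₂
    · subst hbe
      have hc₁ : e₁ < c := by dsimp only [Follows] at hbc; omega
      have hcol₁ := hold he₂ he₁ hf
      have hcol := hold he₂ hc (by dsimp only [Follows] at hf ⊢; omega)
      have hbetween := he.apply_between hc₁ (by omega)
      have := u.injective.ne hc₁.ne'
      rw [mul_swap_apply_right, mul_swap_apply_of_ne u hc₁.ne' hc₂]
      omega
    · by_cases hce : c = e₁
      · subst hce
        have hb₂ : (b : ℕ) < e₂ := by dsimp only [Follows] at hbc; omega
        have hcol := hold hb he₁ (by dsimp only [Follows] at hf ⊢; omega)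
        have hbetween := he.apply_between (c := b) (by omega) hb₂
        rw [mul_swap_apply_left, mul_swap_apply_of_ne u (by omega) hbe]
        omega
      · have hcol := hold hb hc (by dsimp only [Follows] at hf hbc ⊢; omega)
        rw [mul_swap_apply_of_ne u (by omega) hbe, mul_swap_apply_of_ne u hce hc₂]
        exact hcol

end Chain

section Counting

variable {n : ℕ} {w u : Perm (Fin n)} {k : ℕ} {la : Fin n} {lb : ℕ} {e₁ e₂ : Fin n}

theorem Follows.start (hn : 0 < n) (p : Fin n × Fin n) : Follows ⟨0, hn⟩ n p := by
  simp only [Follows, Fin.lt_def, Fin.ext_iff]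
  omega

theorem ChainInv.fst_indicator_mul_swap (H : ChainInv w k la lb u) (he₁ : (e₁ : ℕ) < k)
    (he₂ : k ≤ (e₂ : ℕ)) (hf : Follows la lb (e₁, e₂)) (he : edgeA u e₁ e₂) {a : Fin n}
    (ha : (a : ℕ) < k) :
    (if (u * swap e₁ e₂) a < w a then 1 else 0) =
      (if u a < w a then 1 else 0) + if qEdgeA u e₁ e₂ ∧ e₁ = a then 1 else 0 := by
  by_cases hae : e₁ = a
  · subst hae
    have hrow := H.rowCompat_of_follows he₁ hf he.lt le_rfl
    have := u.injective.ne he.lt.ne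
    unfold RowCompat at hrow
    simp only [mul_swap_apply_left, he.qEdgeA_iff, and_true]
    split_ifs <;> omega
  · rw [mul_swap_apply_of_ne u (Ne.symm hae) (by omega)]
    simp [hae]

theorem ChainInv.snd_indicator_mul_swap (H : ChainInv w k la lb u) (he₁ : (e₁ : ℕ) < k)
    (he₂ : k ≤ (e₂ : ℕ)) (hf : Follows la lb (e₁, e₂)) (he : edgeA u e₁ e₂) {b : Fin n}
    (hb : k ≤ (b : ℕ)) :
    (if w b < (u * swap e₁ e₂) b then 1 else 0) =
      (if w b < u b then 1 else 0) + if qEdgeA u e₁ e₂ ∧ e₂ = b then 1 else 0 := by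
  by_cases hbe : e₂ = b
  · subst hbe
    have hcol := H.col e₂ e₁ he₂ he₁ hf
    have := u.injective.ne he.lt.ne
    unfold ColCompat at hcol
    simp only [mul_swap_apply_right, he.qEdgeA_iff, and_true]
    split_ifs <;> omega
  · rw [mul_swap_apply_of_ne u (by omega) (Ne.symm hbe)]
    simp [hbe]

theorem ChainInv.eq_add_countP_qLabels (f : Perm (Fin n) → ℕ) (P : Fin n × Fin n → Prop)
    [DecidablePred P]
    (hf : ∀ {u : Perm (Fin n)} {la : Fin n} {lb : ℕ} {e₁ e₂ : Fin n}, ChainInv w k la lb u →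
      (e₁ : ℕ) < k → k ≤ (e₂ : ℕ) → Follows la lb (e₁, e₂) → edgeA u e₁ e₂ →
        f (u * swap e₁ e₂) = f u + if qEdgeA u e₁ e₂ ∧ P (e₁, e₂) then 1 else 0)
    {L : List (Fin n × Fin n)} {v : Perm (Fin n)} (H : ChainInv w k la lb u)
    (hmid : ∀ p ∈ L, (p.1 : ℕ) < k ∧ k ≤ (p.2 : ℕ)) (hfol : ∀ p ∈ L, Follows la lb p)
    (hchain : L.Pairwise revChainOrd) (hpath : EPathA u L v) :
    f v = f u + (qLabels u L).countP (fun p => decide (P p)) := by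
  induction L generalizing u la lb with
  | nil =>
    cases (hpath : u = v)
    simp [qLabels]
  | cons p L ih =>
    obtain ⟨he, hpath⟩ := hpath
    obtain ⟨hp, hL⟩ := List.pairwise_cons.1 hchain
    obtain ⟨hp₁, hp₂⟩ := hmid p List.mem_cons_self
    have hfp := hfol p List.mem_cons_self
    rw [ih (H.mul_swap hp₁ hp₂ hfp he) (fun q hq => hmid q (List.mem_cons_of_mem _ hq))
      (fun q hq => hp q hq) hL hpath, hf H hp₁ hp₂ hfp he]
    by_cases hq : qEdgeA u p.1 p.2
    · simp [qLabels, hq, List.countP_cons, add_comm, add_assoc]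
    · simp [qLabels, hq]

end Counting

section Degree

variable {n k : ℕ} {w v : Perm (Fin n)} {L : List (Fin n × Fin n)}

theorem qLabels_sublist :
    ∀ (u : Perm (Fin n)) (L : List (Fin n × Fin n)), (qLabels u L).Sublist L
  | _, [] => .slnil
  | u, p :: L => by
    unfold qLabels
    split_ifs
    · exact (qLabels_sublist _ L).cons_cons p
    · exact (qLabels_sublist _ L).cons p

theorem countP_qLabels_fst (hmid : ∀ p ∈ L, (p.1 : ℕ) < k ∧ k ≤ (p.2 : ℕ))
    (hchain : L.Pairwise revChainOrd) (hpath : EPathA w L v) {a : Fin n} (ha : (a : ℕ) < k) :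
    (qLabels w L).countP (fun p => p.1 = a) = if v a < w a then 1 else 0 := by
  have := (ChainInv.init w k a.pos).eq_add_countP_qLabels
    (fun u => if u a < w a then 1 else 0) (fun p => p.1 = a)
    (fun H he₁ he₂ hf he => H.fst_indicator_mul_swap he₁ he₂ hf he ha) hmid
    (fun p _ => Follows.start a.pos p) hchain hpath
  simpa using this.symm

theorem countP_qLabels_snd (hmid : ∀ p ∈ L, (p.1 : ℕ) < k ∧ k ≤ (p.2 : ℕ))
    (hchain : L.Pairwise revChainOrd) (hpath : EPathA w L v) {b : Fin n} (hb : k ≤ (b : ℕ)) :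
    (qLabels w L).countP (fun p => p.2 = b) = if w b < v b then 1 else 0 := by
  have := (ChainInv.init w k b.pos).eq_add_countP_qLabels
    (fun u => if w b < u b then 1 else 0) (fun p => p.2 = b)
    (fun H he₁ he₂ hf he => H.snd_indicator_mul_swap he₁ he₂ hf he hb) hmid
    (fun p _ => Follows.start b.pos p) hchain hpath
  simpa using this.symm

theorem degCoeff_eq_sum_fst (hmid : ∀ p ∈ L, (p.1 : ℕ) < k ∧ k ≤ (p.2 : ℕ)) {i : ℕ}
    (hik : i ≤ k) :
    degCoeff w L i = ∑ a ∈ univ.filter (fun a : Fin n => (a : ℕ) < i),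
      (qLabels w L).countP (fun p => p.1 = a) := by
  rw [degCoeff, ← List.countP_eq_length_filter, ← List.countP_mem_eq_sum]
  refine List.countP_congr fun p hp => ?_
  have := (hmid p ((qLabels_sublist w L).subset hp)).2
  simp only [decide_eq_true_eq, mem_filter, mem_univ, true_and]
  omega

theorem degCoeff_eq_sum_snd (hmid : ∀ p ∈ L, (p.1 : ℕ) < k ∧ k ≤ (p.2 : ℕ)) {i : ℕ}
    (hki : k ≤ i) :
    degCoeff w L i = ∑ b ∈ univ.filter (fun b : Fin n => i ≤ (b : ℕ)),
      (qLabels w L).countP (fun p => p.2 = b) := by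
  rw [degCoeff, ← List.countP_eq_length_filter, ← List.countP_mem_eq_sum]
  refine List.countP_congr fun p hp => ?_
  have := (hmid p ((qLabels_sublist w L).subset hp)).1
  simp only [decide_eq_true_eq, mem_filter, mem_univ, true_and]
  omega

end Degree

theorem stmt17_general {n k : ℕ}
    (w v : Equiv.Perm (Fin n)) (L : List (Fin n × Fin n))
    (hmid : ∀ p ∈ L, (p.1 : ℕ) < k ∧ k ≤ (p.2 : ℕ))
    (hchain : List.Chain' revChainOrd L)
    (hpath : EPathA w L v) :
    (∀ i : ℕ, 1 ≤ i → i ≤ k →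
      degCoeff w L i =
        (Finset.univ.filter (fun j : Fin n => (j : ℕ) < i ∧ v j < w j)).card) ∧
    (∀ i : ℕ, k ≤ i → i ≤ n - 1 →
      degCoeff w L i =
        (Finset.univ.filter (fun j : Fin n => i ≤ (j : ℕ) ∧ w j < v j)).card) := by
  have : Trans (@revChainOrd n) revChainOrd revChainOrd := ⟨revChainOrd_trans⟩
  have hpw := List.isChain_iff_pairwise.1 hchain
  refine ⟨fun i _ hik => ?_, fun i hki _ => ?_⟩
  · rw [degCoeff_eq_sum_fst hmid hik, ← filter_filter, card_filter]
    exact sum_congr rfl fun a ha =>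
      countP_qLabels_fst hmid hpw hpath (lt_of_lt_of_le (mem_filter.1 ha).2 hik)
  · rw [degCoeff_eq_sum_snd hmid hki, ← filter_filter, card_filter]
    exact sum_congr rfl fun b hb =>
      countP_qLabels_snd hmid hpw hpath (le_trans hki (mem_filter.1 hb).2)

/-- For a path in `QB(S_n)` from `w` to `v ≠ w` whose labels form a
subsequence of the reverse lex `(-ϖ_k)`-chain, the degree `d = (d_1, …, d_{n-1})` of
its quantum part is given by `d_i = #{j ≤ i : v(j) < w(j)}` for `1 ≤ i ≤ k` and
`d_i = #{j > i : v(j) > w(j)}` for `k ≤ i ≤ n-1` (all 1-indexed). -/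
theorem stmt17 {n k : ℕ} (hk1 : 1 ≤ k) (hk2 : k ≤ n - 1)
    (w v : Equiv.Perm (Fin n)) (L : List (Fin n × Fin n))
    (hmid : ∀ p ∈ L, (p.1 : ℕ) < k ∧ k ≤ (p.2 : ℕ))
    (hchain : List.Chain' revChainOrd L)
    (hpath : EPathA w L v)
    (hne : v ≠ w) :
    (∀ i : ℕ, 1 ≤ i → i ≤ k →
      degCoeff w L i =
        (Finset.univ.filter (fun j : Fin n => (j : ℕ) < i ∧ v j < w j)).card) ∧
    (∀ i : ℕ, k ≤ i → i ≤ n - 1 →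
      degCoeff w L i =
        (Finset.univ.filter (fun j : Fin n => i ≤ (j : ℕ) ∧ w j < v j)).card) :=
  stmt17_general w v L hmid hchain hpath
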